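/- Let L/K be a finite separable field extension over a characteristic-0 field k and let L̃/K be a Galois closure of L/K. Then RD(L̃/K) = RD(L/K). -/

import Mathlib

noncomputable section

variable (k : Type) [Field k]

/-- `TrdegLE k F d` : the transcendence degree of `F` over `k` is at most `d`,
i.e. there is a finite subset of `F` of cardinality at most `d` over which `F` is algebraic. -/
def TrdegLE (F : Type) [Field F] [Algebra k F] (d : ℕ) : Prop :=
  ∃ s : Finset F, s.card ≤ d ∧
    Algebra.IsAlgebraic (IntermediateField.adjoin k (s : Set F)) F

/-- One step of a resolvent tower inside an ambient field `Ω`: `E' = E ⊗_F F̃` for some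
subfield `F ⊆ E` of transcendence degree at most `d` over `k` and some finite extension
`F̃/F` (realized inside `Ω`, so that `E' = E ⊔ F̃` with `[E' : E] = [F̃ : F]`). -/
def RDStep (Ω : Type) [Field Ω] [Algebra k Ω] (d : ℕ)
    (E E' : IntermediateField k Ω) : Prop :=
  ∃ (F Ft : IntermediateField k Ω) (_hFE : F ≤ E) (hFFt : F ≤ Ft),
    TrdegLE k F d ∧
    (letI : Algebra F Ft := (IntermediateField.inclusion hFFt).toRingHom.toAlgebra
     letI : Module F Ft := Algebra.toModule
     FiniteDimensional F Ft) ∧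
    E' = E ⊔ Ft ∧
    (letI : Algebra F Ft := (IntermediateField.inclusion hFFt).toRingHom.toAlgebra
     letI : Module F Ft := Algebra.toModule
     letI : Algebra E (E ⊔ Ft : IntermediateField k Ω) :=
       (IntermediateField.inclusion le_sup_left).toRingHom.toAlgebra
     letI : Module E (E ⊔ Ft : IntermediateField k Ω) := Algebra.toModule
     Module.finrank F Ft = Module.finrank E (E ⊔ Ft : IntermediateField k Ω))

variable (K L : Type) [Field K] [Field L] [Algebra k K] [Algebra k L]

/-- `RDLE k K L d` : the resolvent degree of `L/K` over `k` is at most `d`, i.e. there is a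
finite tower `K = L₀ ⊆ L₁ ⊆ ⋯ ⊆ L_r` of finite extensions (inside an algebraic closure of
`K`), each stage being a base change `L_i = L_{i-1} ⊗_{F_i} F̃_i` along a finite extension
of a subfield `F_i ⊆ L_{i-1}` of transcendence degree at most `d` over `k`, together with a
`K`-embedding of `L` into `L_r`. -/
def RDLE [Algebra K L] [IsScalarTower k K L] (d : ℕ) : Prop :=
  ∃ (r : ℕ) (E : Fin (r + 1) → IntermediateField k (AlgebraicClosure K)),
    E 0 = (IsScalarTower.toAlgHom k K (AlgebraicClosure K)).fieldRange ∧
    (∀ i : Fin r, RDStep k (AlgebraicClosure K) d (E i.castSucc) (E i.succ)) ∧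
    ∃ f : L →ₐ[k] AlgebraicClosure K,
      f.fieldRange ≤ E (Fin.last r) ∧
      ∀ x : K, f (algebraMap K L x) = algebraMap K (AlgebraicClosure K) x

/-- The resolvent degree `RD_k(L/K)` of a field extension `L/K` over `k`. -/
def RD [Algebra K L] [IsScalarTower k K L] : ℕ := sInf {d | RDLE k K L d}

/-!
Since `L` embeds into `L̃`, a resolvent tower for `L̃` is one for `L`. Conversely, let `f` embed
`L` into the top of a resolvent tower in `K̄`. Every `K`-embedding `e` of `L` into `K̄` is `σ ∘ f`
for a `K`-endomorphism `σ` of `K̄`, and the image of the tower under `σ` is again a resolvent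
tower; the compositum of these finitely many towers is a resolvent tower containing all conjugates
of `L`, hence a copy of `L̃`. Towers can be moved and composed because, by the primitive element
theorem (characteristic 0), each step adjoins one element `a` integral over a subfield `F` of
transcendence degree `≤ d`; adjoining `a` to any larger field `E` is again a step once `F` is
enlarged by the coefficients of the minimal polynomial of `a` over `E`, which are algebraic
over `F`.
-/

open IntermediateField Polynomial Relation

theorem Relation.reflTransGen_iff_exists_fin {α : Type*} {r : α → α → Prop} {a b : α} :
    ReflTransGen r a b ↔ ∃ (n : ℕ) (f : Fin (n + 1) → α),
      f 0 = a ∧ (∀ i : Fin n, r (f i.castSucc) (f i.succ)) ∧ f (Fin.last n) = b := by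
  constructor
  · intro h
    induction h with
    | refl => exact ⟨0, fun _ ↦ a, rfl, fun i ↦ i.elim0, rfl⟩
    | @tail b c _ hbc ih =>
      obtain ⟨n, f, hf0, hstep, hlast⟩ := ih
      refine ⟨n + 1, Fin.snoc f c, by rw [← Fin.castSucc_zero, Fin.snoc_castSucc, hf0], ?_,
        Fin.snoc_last ..⟩
      intro i
      induction i using Fin.lastCases with
      | last => simpa [hlast] using hbc
      | cast j => rw [Fin.snoc_castSucc, Fin.succ_castSucc, Fin.snoc_castSucc]; exact hstep j
  · rintro ⟨n, f, rfl, hstep, rfl⟩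
    suffices ∀ i : Fin (n + 1), ReflTransGen r (f 0) (f i) from this _
    intro i
    induction i using Fin.induction with
    | zero => exact .refl
    | succ i ih => exact ih.tail (hstep i)

theorem isIntegral_coeff_minpoly_of_isScalarTower {F E A : Type*} [Field F] [Field E] [Ring A]
    [Algebra F E] [Algebra E A] [Algebra F A] [IsScalarTower F E A] {a : A}
    (ha : IsIntegral F a) (i : ℕ) : IsIntegral F ((minpoly E a).coeff i) := by
  have hlifts := integralClosure.mem_lifts_of_monic_of_dvd_map E (minpoly.monic ha)
    (minpoly.monic ha.tower_top) (minpoly.dvd_map_of_isScalarTower F E a)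
  obtain ⟨c, hc⟩ := (lifts_iff_coeff_lifts _).mp hlifts i
  exact hc ▸ c.2

theorem exists_algHom_comp_eq {F K Ω : Type*} [Field F] [Field K] [Field Ω] [Algebra F K]
    [Algebra F Ω] [Normal F Ω] (f e : K →ₐ[F] Ω) : ∃ σ : Ω →ₐ[F] Ω, σ.comp f = e := by
  let χ := e.comp f.equivFieldRange.symm.toAlgHom
  refine ⟨χ.liftNormal Ω, AlgHom.ext fun x ↦ ?_⟩
  simpa [χ] using χ.liftNormal_commutes Ω (f.equivFieldRange x)

theorem apply_mem_of_normalClosure_eq_top {F K L Ω : Type*} [Field F] [Field K] [Field L]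
    [Field Ω] [Algebra F K] [Algebra F L] [Algebra F Ω] (hN : normalClosure F K L = ⊤)
    (g : L →ₐ[F] Ω) {C : IntermediateField F Ω} (hC : ∀ (e : K →ₐ[F] Ω) x, e x ∈ C) (y : L) :
    g y ∈ C := by
  have hle : (normalClosure F K L).map g ≤ C := by
    rw [normalClosure_def, IntermediateField.map_iSup]
    refine iSup_le fun φ ↦ ?_
    rw [AlgHom.map_fieldRange]
    rintro _ ⟨x, rfl⟩
    exact hC _ x
  exact hle ⟨y, hN ▸ trivial, rfl⟩

theorem toAlgHom_fieldRange_map_restrictScalars {k K Ω : Type*} [Field k] [Field K] [Field Ω]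
    [Algebra k K] [Algebra k Ω] [Algebra K Ω] [IsScalarTower k K Ω] (σ : Ω →ₐ[K] Ω) :
    (IsScalarTower.toAlgHom k K Ω).fieldRange.map (σ.restrictScalars k) =
      (IsScalarTower.toAlgHom k K Ω).fieldRange := by
  rw [AlgHom.map_fieldRange]
  congr 1
  ext x
  exact σ.commutes x

section Trdeg

variable {k}

theorem trdegLE_iff_trdeg_le (F : Type) [Field F] [Algebra k F] (d : ℕ) :
    TrdegLE k F d ↔ Algebra.trdeg k F ≤ d := by
  constructor
  · rintro ⟨s, hcard, halg⟩
    rw [isAlgebraic_adjoin_iff_top] at halg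
    calc Algebra.trdeg k F ≤ Cardinal.mk (s : Set F) := Algebra.IsAlgebraic.trdeg_le_cardinalMk k _
      _ = s.card := Cardinal.mk_coe_finset
      _ ≤ d := by exact_mod_cast hcard
  · intro h
    obtain ⟨s, hs⟩ := exists_isTranscendenceBasis k F
    have hfin : s.Finite := Cardinal.lt_aleph0_iff_set_finite.1
      (hs.cardinalMk_eq_trdeg.trans_lt (h.trans_lt Cardinal.natCast_lt_aleph0))
    refine ⟨hfin.toFinset, ?_, ?_⟩
    · rw [← Set.ncard_eq_toFinset_card s hfin, ← Nat.cast_le (α := Cardinal)]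
      exact ((Set.cast_ncard hfin).trans hs.cardinalMk_eq_trdeg).trans_le h
    · have := hs.isAlgebraic_field
      rwa [Subtype.range_coe, ← Set.Finite.coe_toFinset hfin] at this

theorem TrdegLE.of_algEquiv {X X' : Type} [Field X] [Field X'] [Algebra k X] [Algebra k X']
    (e : X ≃ₐ[k] X') {d : ℕ} (h : TrdegLE k X d) : TrdegLE k X' d := by
  rw [trdegLE_iff_trdeg_le] at h ⊢
  rwa [← e.trdeg_eq]

variable {Ω : Type} [Field Ω] [Algebra k Ω]

theorem TrdegLE.restrictScalars {F : IntermediateField k Ω} {d : ℕ} (h : TrdegLE k F d)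
    (M : IntermediateField F Ω) [Algebra.IsAlgebraic F M] :
    TrdegLE k (M.restrictScalars k) d := by
  rw [trdegLE_iff_trdeg_le] at h ⊢
  change Algebra.trdeg k M ≤ d
  have : FaithfulSMul F M :=
    (faithfulSMul_iff_algebraMap_injective F M).mpr (algebraMap F M).injective
  rw [← trdeg_add_eq k F (A := M), trdeg_eq_zero (R := F) (A := M), add_zero]
  exact h

end Trdeg

section RDStep

variable {k} {Ω : Type} [Field Ω] [Algebra k Ω]

theorem IsIntegral.of_intermediateField_le {F E : IntermediateField k Ω} (h : F ≤ E) {x : Ω}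
    (hx : IsIntegral F x) : IsIntegral E x := by
  let := (inclusion h).toRingHom.toAlgebra
  have : IsScalarTower F E Ω := .of_algebraMap_eq fun _ ↦ rfl
  exact hx.tower_top

-- `RDStep` measures degrees with the `F`-algebra structure on `T` given by `inclusion h`.
def inclusionLinearEquivExtendScalars {F T : IntermediateField k Ω} (h : F ≤ T) :
    letI : Algebra F T := (inclusion h).toRingHom.toAlgebra
    letI : Module F T := Algebra.toModule
    T ≃ₗ[F] extendScalars h :=
  letI : Algebra F T := (inclusion h).toRingHom.toAlgebra
  { toFun := fun x ↦ ⟨x.1, x.2⟩, invFun := fun x ↦ ⟨x.1, x.2⟩, left_inv := fun _ ↦ rfl,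
    right_inv := fun _ ↦ rfl, map_add' := fun _ _ ↦ rfl, map_smul' := fun _ _ ↦ rfl }

theorem finrank_inclusion_eq_finrank_extendScalars {F T : IntermediateField k Ω} (h : F ≤ T) :
    (letI : Algebra F T := (inclusion h).toRingHom.toAlgebra
     letI : Module F T := Algebra.toModule
     Module.finrank F T) = Module.finrank F (extendScalars h) :=
  letI : Algebra F T := (inclusion h).toRingHom.toAlgebra
  (inclusionLinearEquivExtendScalars h).finrank_eq

theorem finiteDimensional_inclusion_iff {F T : IntermediateField k Ω} (h : F ≤ T) :
    (letI : Algebra F T := (inclusion h).toRingHom.toAlgebra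
     letI : Module F T := Algebra.toModule
     FiniteDimensional F T) ↔ FiniteDimensional F (extendScalars h) :=
  letI : Algebra F T := (inclusion h).toRingHom.toAlgebra
  ⟨fun _ ↦ .equiv (inclusionLinearEquivExtendScalars h),
    fun _ ↦ .equiv (inclusionLinearEquivExtendScalars h).symm⟩

theorem extendScalars_eq_adjoin_of_eq_sup {E T : IntermediateField k Ω} {S : Set Ω} (h : E ≤ T)
    (hT : T = E ⊔ adjoin k S) : extendScalars h = adjoin E S := by
  apply restrictScalars_injective k
  rw [extendScalars_restrictScalars, restrictScalars_adjoin_eq_sup, hT]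

theorem rdStep_sup_adjoin_of_natDegree_minpoly_eq {d : ℕ} {F E : IntermediateField k Ω} {a : Ω}
    (hFE : F ≤ E) (htr : TrdegLE k F d) (ha : IsIntegral F a)
    (hdeg : (minpoly F a).natDegree = (minpoly E a).natDegree) :
    RDStep k Ω d E (E ⊔ adjoin k {a}) := by
  set Ft := F ⊔ adjoin k {a}
  have hsup : E ⊔ Ft = E ⊔ adjoin k {a} := by rw [← sup_assoc, sup_eq_left.mpr hFE]
  have hFt : extendScalars (le_sup_left : F ≤ Ft) = adjoin F {a} :=
    extendScalars_eq_adjoin_of_eq_sup _ rfl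
  have hEFt : extendScalars (le_sup_left : E ≤ E ⊔ Ft) = adjoin E {a} :=
    extendScalars_eq_adjoin_of_eq_sup _ hsup
  refine ⟨F, Ft, hFE, le_sup_left, htr, ?_, hsup.symm, ?_⟩
  · rw [finiteDimensional_inclusion_iff, hFt]
    exact adjoin.finiteDimensional ha
  · rw [finrank_inclusion_eq_finrank_extendScalars, finrank_inclusion_eq_finrank_extendScalars,
      hFt, hEFt, adjoin.finrank ha, adjoin.finrank (ha.of_intermediateField_le hFE), hdeg]

theorem rdStep_sup_adjoin {d : ℕ} {F E : IntermediateField k Ω} {a : Ω} (hFE : F ≤ E)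
    (htr : TrdegLE k F d) (ha : IsIntegral F a) : RDStep k Ω d E (E ⊔ adjoin k {a}) := by
  let := (inclusion hFE).toRingHom.toAlgebra
  have : IsScalarTower F E Ω := .of_algebraMap_eq fun _ ↦ rfl
  set S := Set.range fun i ↦ ((minpoly E a).coeff i : Ω)
  have hS : ∀ x ∈ S, IsIntegral F x := by
    rintro _ ⟨i, rfl⟩
    exact (isIntegral_coeff_minpoly_of_isScalarTower ha i).map (IsScalarTower.toAlgHom F E Ω)
  have : Algebra.IsAlgebraic F (adjoin F S) := isAlgebraic_adjoin hS
  set F' := (adjoin F S).restrictScalars k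
  have hF'E : F' ≤ E := (restrictScalars_adjoin_eq_sup k F S).trans_le <|
    sup_le hFE (adjoin_le_iff.mpr (by rintro _ ⟨i, rfl⟩; exact ((minpoly E a).coeff i).2))
  have ha' : IsIntegral F' a := ha.tower_top (A := adjoin F S)
  refine rdStep_sup_adjoin_of_natDegree_minpoly_eq hF'E (htr.restrictScalars _) ha' ?_
  let := (inclusion hF'E).toRingHom.toAlgebra
  have : IsScalarTower F' E Ω := .of_algebraMap_eq fun _ ↦ rfl
  have hlifts : minpoly E a ∈ lifts (algebraMap F' E) :=
    (lifts_iff_coeff_lifts _).mpr fun n ↦ ⟨⟨_, subset_adjoin F S ⟨n, rfl⟩⟩, rfl⟩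
  rw [← minpoly.map_algebraMap ha' hlifts, natDegree_map]

variable [CharZero k]

theorem RDStep.exists_eq_sup_adjoin {d : ℕ} {E E' : IntermediateField k Ω}
    (h : RDStep k Ω d E E') : ∃ (F : IntermediateField k Ω) (a : Ω),
      F ≤ E ∧ TrdegLE k F d ∧ IsIntegral F a ∧ E' = E ⊔ adjoin k {a} := by
  obtain ⟨F, Ft, hFE, hFFt, htr, hfin, rfl, -⟩ := h
  rw [finiteDimensional_inclusion_iff] at hfin
  have : CharZero F := charZero_of_injective_algebraMap (algebraMap k F).injective
  obtain ⟨α, hα⟩ := Field.exists_primitive_element F (extendScalars hFFt)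
  have hadj : adjoin F {(α : Ω)} = extendScalars hFFt := by
    rw [← lift_adjoin_simple, hα, lift_top]
  have hFt : Ft = F ⊔ adjoin k {(α : Ω)} := by
    rw [← restrictScalars_adjoin_eq_sup, hadj, extendScalars_restrictScalars]
  refine ⟨F, α, hFE, htr, isIntegral_iff.mp (.of_finite F α), ?_⟩
  calc E ⊔ Ft = E ⊔ (F ⊔ adjoin k {(α : Ω)}) := by rw [← hFt]
    _ = E ⊔ adjoin k {(α : Ω)} := by rw [← sup_assoc, sup_eq_left.mpr hFE]

theorem RDStep.sup_left {d : ℕ} {E E' : IntermediateField k Ω} (D : IntermediateField k Ω)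
    (h : RDStep k Ω d E E') : RDStep k Ω d (D ⊔ E) (D ⊔ E') := by
  obtain ⟨F, a, hFE, htr, ha, rfl⟩ := h.exists_eq_sup_adjoin
  rw [← sup_assoc]
  exact rdStep_sup_adjoin (hFE.trans le_sup_right) htr ha

theorem RDStep.map {d : ℕ} {E E' : IntermediateField k Ω} (σ : Ω →ₐ[k] Ω)
    (h : RDStep k Ω d E E') : RDStep k Ω d (E.map σ) (E'.map σ) := by
  obtain ⟨F, a, hFE, htr, ha, rfl⟩ := h.exists_eq_sup_adjoin
  rw [IntermediateField.map_sup, adjoin_map, Set.image_singleton]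
  refine rdStep_sup_adjoin (map_mono σ hFE) (htr.of_algEquiv (equivMap F σ)) ?_
  exact ha.map_of_comp_eq (equivMap F σ).toRingHom σ.toRingHom rfl

end RDStep

section Towers

variable {k} {Ω : Type} [Field Ω] [Algebra k Ω] [CharZero k] {d : ℕ}

theorem reflTransGen_rdStep_sup_left {E E' : IntermediateField k Ω} (D : IntermediateField k Ω)
    (h : ReflTransGen (RDStep k Ω d) E E') : ReflTransGen (RDStep k Ω d) (D ⊔ E) (D ⊔ E') :=
  ReflTransGen.lift (D ⊔ ·) (fun _ _ ↦ RDStep.sup_left D) _ _ h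

theorem reflTransGen_rdStep_map {E E' : IntermediateField k Ω} (σ : Ω →ₐ[k] Ω)
    (h : ReflTransGen (RDStep k Ω d) E E') :
    ReflTransGen (RDStep k Ω d) (E.map σ) (E'.map σ) :=
  ReflTransGen.lift (·.map σ) (fun _ _ ↦ RDStep.map σ) _ _ h

theorem reflTransGen_rdStep_sup_finset {ι : Type*} (s : Finset ι) {E₀ : IntermediateField k Ω}
    {E : ι → IntermediateField k Ω} (h : ∀ i ∈ s, ReflTransGen (RDStep k Ω d) E₀ (E i)) :
    ReflTransGen (RDStep k Ω d) E₀ (E₀ ⊔ s.sup E) := by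
  classical
  induction s using Finset.induction_on with
  | empty => simpa using ReflTransGen.refl
  | insert a s _ ih =>
    have hs := ih fun i hi ↦ h i (Finset.mem_insert_of_mem hi)
    have ha := reflTransGen_rdStep_sup_left (E₀ ⊔ s.sup E) (h a (Finset.mem_insert_self a s))
    rw [sup_eq_left.mpr le_sup_left] at ha
    convert hs.trans ha using 1
    rw [Finset.sup_insert]
    ac_rfl

end Towers

section ResolventTowers

variable {k K L}
variable [Algebra K L] [IsScalarTower k K L]

theorem rdle_iff_exists_reflTransGen (d : ℕ) : RDLE k K L d ↔
    ∃ E : IntermediateField k (AlgebraicClosure K),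
      ReflTransGen (RDStep k (AlgebraicClosure K) d)
        (IsScalarTower.toAlgHom k K (AlgebraicClosure K)).fieldRange E ∧
      ∃ f : L →ₐ[K] AlgebraicClosure K, ∀ x, f x ∈ E := by
  constructor
  · rintro ⟨r, E, h0, hsteps, f, hf, hfK⟩
    exact ⟨E (Fin.last r), reflTransGen_iff_exists_fin.mpr ⟨r, E, h0, hsteps, rfl⟩,
      { f with commutes' := hfK }, fun x ↦ hf ⟨x, rfl⟩⟩
  · rintro ⟨E, hchain, f, hf⟩
    obtain ⟨r, E', h0, hsteps, rfl⟩ := reflTransGen_iff_exists_fin.mp hchain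
    exact ⟨r, E', h0, hsteps, f.restrictScalars k, by rintro _ ⟨x, rfl⟩; exact hf x, f.commutes⟩

theorem RDLE.of_algHom {M : Type} [Field M] [Algebra k M] [Algebra K M] [IsScalarTower k K M]
    {d : ℕ} (φ : L →ₐ[K] M) (h : RDLE k K M d) : RDLE k K L d := by
  obtain ⟨E, hchain, f, hf⟩ := (rdle_iff_exists_reflTransGen d).mp h
  exact (rdle_iff_exists_reflTransGen d).mpr ⟨E, hchain, f.comp φ, fun x ↦ hf (φ x)⟩

theorem RDLE.of_normalClosure_eq_top [CharZero k] [FiniteDimensional K L] {Lt : Type} [Field Lt]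
    [Algebra k Lt] [Algebra K Lt] [IsScalarTower k K Lt] [Algebra.IsAlgebraic K Lt]
    (hN : normalClosure K L Lt = ⊤) {d : ℕ} (h : RDLE k K L d) : RDLE k K Lt d := by
  classical
  obtain ⟨E, hchain, f, hf⟩ := (rdle_iff_exists_reflTransGen d).mp h
  choose σ hσ using fun e : L →ₐ[K] AlgebraicClosure K ↦ exists_algHom_comp_eq f e
  let Eσ := fun e ↦ E.map ((σ e).restrictScalars k)
  let E₀ := (IsScalarTower.toAlgHom k K (AlgebraicClosure K)).fieldRange
  let C := E₀ ⊔ Finset.univ.sup Eσ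
  have hconj : ∀ e, ReflTransGen (RDStep k (AlgebraicClosure K) d) E₀ (Eσ e) := by
    intro e
    simpa only [toAlgHom_fieldRange_map_restrictScalars] using
      reflTransGen_rdStep_map ((σ e).restrictScalars k) hchain
  have hEσ : ∀ e x, e x ∈ Eσ e := fun e x ↦ ⟨f x, hf x, DFunLike.congr_fun (hσ e) x⟩
  let CK : IntermediateField K (AlgebraicClosure K) :=
    C.toSubfield.toIntermediateField fun x ↦ le_sup_left (a := E₀) ⟨x, rfl⟩
  refine (rdle_iff_exists_reflTransGen d).mpr
    ⟨C, reflTransGen_rdStep_sup_finset _ fun e _ ↦ hconj e, IsAlgClosed.lift, ?_⟩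
  refine apply_mem_of_normalClosure_eq_top (C := CK) hN _ fun e x ↦ ?_
  exact le_sup_right (a := E₀) (Finset.le_sup (f := Eσ) (Finset.mem_univ e) (hEσ e x))

end ResolventTowers

theorem rd_galoisClosure_general (k K L Lt : Type) [Field k] [CharZero k] [Field K] [Field L]
    [Field Lt] [Algebra k K] [Algebra k L] [Algebra k Lt]
    [Algebra K L] [Algebra K Lt] [Algebra L Lt]
    [IsScalarTower k K L] [IsScalarTower k K Lt]
    [IsScalarTower K L Lt]
    [FiniteDimensional K L]
    [IsGalois K Lt]
    (hmin : ∀ M : IntermediateField K Lt,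
      (IsScalarTower.toAlgHom K L Lt).fieldRange ≤ M → Normal K M → M = ⊤) :
    RD k K Lt = RD k K L := by
  have hN : normalClosure K L Lt = ⊤ :=
    hmin _ (IsScalarTower.toAlgHom K L Lt).fieldRange_le_normalClosure inferInstance
  unfold RD
  congr 1
  ext d
  exact ⟨RDLE.of_algHom (IsScalarTower.toAlgHom K L Lt), RDLE.of_normalClosure_eq_top hN⟩

/-- Let `L/K` be a finite (separable, as we are in characteristic zero) field extension
over a characteristic-zero field `k`, and let `L̃/K` be a Galois closure of `L/K`
(a minimal Galois extension of `K` containing `L`).  Then `RD(L̃/K) = RD(L/K)`. -/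
theorem rd_galoisClosure (k K L Lt : Type) [Field k] [CharZero k] [Field K] [Field L]
    [Field Lt] [Algebra k K] [Algebra k L] [Algebra k Lt]
    [Algebra K L] [Algebra K Lt] [Algebra L Lt]
    [IsScalarTower k K L] [IsScalarTower k K Lt] [IsScalarTower k L Lt]
    [IsScalarTower K L Lt]
    [FiniteDimensional K L] [FiniteDimensional K Lt]
    [IsGalois K Lt]
    (hmin : ∀ M : IntermediateField K Lt,
      (IsScalarTower.toAlgHom K L Lt).fieldRange ≤ M → Normal K M → M = ⊤) :
    RD k K Lt = RD k K L :=
  rd_galoisClosure_general k K L Lt hmin
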